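/- arXiv:1404.2218 — 3 statements merged into one kernel-verified Lean document; each statement's English description precedes it below -/
import Mathlib

section
/- Let N ∈ ℕ, let A be an N×N real matrix whose Frobenius norm satisfies ‖A‖ ≤ m for some m > 0, let X = e_i be a standard basis vector of ℝ^N, and let Ψ = diag(A X) − diag(X) Aᵀ − A diag(X). Then for every C ∈ ℝ^N one has Cᵀ Ψ C ≤ 3m |C|², where |C| denotes the Euclidean norm of C; equivalently, ‖C‖_X ≤ √(3m) |C|. -/
open Matrix BigOperators

/-- Lemma 2.3 of the paper: for `X = e_i` and
`Ψ = diag(AX) − diag(X)Aᵀ − A diag(X)`, the quadratic form `Cᵀ Ψ C` is bounded by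
`3m |C|²` whenever the Frobenius norm of `A` is at most `m`. -/
theorem quadratic_form_bound_of_frobenius
    (N : ℕ) (A : Matrix (Fin N) (Fin N) ℝ) (m : ℝ) (hm : 0 < m)
    (hA : Real.sqrt ((Aᵀ * A).trace) ≤ m)
    (i : Fin N) (X : Fin N → ℝ) (hX : X = Pi.single i 1)
    (Ψ : Matrix (Fin N) (Fin N) ℝ)
    (hΨ : Ψ = Matrix.diagonal (A.mulVec X) - Matrix.diagonal X * Aᵀ - A * Matrix.diagonal X)
    (C : Fin N → ℝ) :
    C ⬝ᵥ Ψ.mulVec C ≤ 3 * m * (∑ j, (C j) ^ 2) := by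
  subst hX hΨ
  set S : ℝ := ∑ j, (C j) ^ 2 with hSdef
  have hS : 0 ≤ S := Finset.sum_nonneg fun j _ => sq_nonneg _
  -- Step 1: compute the quadratic form
  have h1 : A.mulVec (Pi.single i 1) = fun j => A j i := by
    funext j; simp [mulVec, dotProduct, Pi.single_apply, mul_ite]
  have t1 : C ⬝ᵥ (Matrix.diagonal (fun j => A j i)).mulVec C = ∑ j, A j i * C j ^ 2 := by
    simp only [dotProduct, mulVec_diagonal]; congr 1; funext j; ring
  have t2 : C ⬝ᵥ (Matrix.diagonal (Pi.single i 1) * Aᵀ).mulVec C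
      = C i * ∑ j, A j i * C j := by
    simp only [dotProduct, mulVec, Matrix.diagonal_mul, Matrix.transpose_apply,
      Pi.single_apply, ite_mul, one_mul, zero_mul, Finset.sum_ite_irrel, Finset.sum_const_zero,
      mul_ite, mul_zero, Finset.sum_ite_eq', Finset.mem_univ, if_true, Finset.mul_sum]
  have t3 : C ⬝ᵥ (A * Matrix.diagonal (Pi.single i 1)).mulVec C
      = C i * ∑ j, A j i * C j := by
    simp only [dotProduct, mulVec, Matrix.mul_diagonal, Pi.single_apply,
      mul_ite, mul_one, mul_zero, ite_mul, zero_mul, Finset.sum_ite_eq', Finset.mem_univ,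
      if_true]
    rw [Finset.mul_sum]; congr 1; funext j; ring
  have key : C ⬝ᵥ (Matrix.diagonal (A.mulVec (Pi.single i 1))
        - Matrix.diagonal (Pi.single i 1) * Aᵀ - A * Matrix.diagonal (Pi.single i 1)).mulVec C
      = (∑ j, A j i * C j ^ 2) - 2 * (C i * ∑ j, A j i * C j) := by
    rw [h1, Matrix.sub_mulVec, Matrix.sub_mulVec, dotProduct_sub, dotProduct_sub, t1, t2, t3]
    ring
  rw [key]
  -- Step 2: the column `i` of `A` has squared norm at most `m ^ 2`
  have htr : (Aᵀ * A).trace = ∑ k, ∑ j, (A j k) ^ 2 := by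
    simp only [Matrix.trace, Matrix.diag, Matrix.mul_apply, Matrix.transpose_apply, sq]
  have htr_nonneg : 0 ≤ (Aᵀ * A).trace := by
    rw [htr]
    exact Finset.sum_nonneg fun k _ => Finset.sum_nonneg fun j _ => sq_nonneg _
  have htrm : (Aᵀ * A).trace ≤ m ^ 2 := by
    have := Real.sqrt_le_sqrt (le_of_eq (Real.sq_sqrt htr_nonneg).symm)
    nlinarith [Real.sq_sqrt htr_nonneg, Real.sqrt_nonneg ((Aᵀ * A).trace)]
  have hcol : ∑ j, (A j i) ^ 2 ≤ m ^ 2 := by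
    refine le_trans ?_ htrm
    rw [htr]
    exact Finset.single_le_sum (f := fun k => ∑ j, (A j k) ^ 2)
      (fun k _ => Finset.sum_nonneg fun j _ => sq_nonneg _) (Finset.mem_univ i)
  -- Step 3: bound the first sum
  have b1 : (∑ j, A j i * C j ^ 2) ≤ m * S := by
    rw [hSdef, Finset.mul_sum]
    refine Finset.sum_le_sum fun j _ => ?_
    have hji : (A j i) ^ 2 ≤ m ^ 2 :=
      le_trans (Finset.single_le_sum (f := fun j => (A j i) ^ 2)
        (fun j _ => sq_nonneg _) (Finset.mem_univ j)) hcol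
    have : A j i ≤ m := by nlinarith
    exact mul_le_mul_of_nonneg_right this (sq_nonneg _)
  -- Step 4: bound the cross term via Cauchy–Schwarz
  have hCi : (C i) ^ 2 ≤ S :=
    Finset.single_le_sum (f := fun j => (C j) ^ 2) (fun j _ => sq_nonneg _) (Finset.mem_univ i)
  have hcs : (∑ j, A j i * C j) ^ 2 ≤ (∑ j, (A j i) ^ 2) * S := by
    exact Finset.sum_mul_sq_le_sq_mul_sq Finset.univ (fun j => A j i) C
  have hT2 : (∑ j, A j i * C j) ^ 2 ≤ m ^ 2 * S :=
    le_trans hcs (mul_le_mul_of_nonneg_right hcol hS)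
  have hcross : -(C i * ∑ j, A j i * C j) ≤ m * S := by
    have h4 : (C i * ∑ j, A j i * C j) ^ 2 ≤ (m * S) ^ 2 := by nlinarith
    nlinarith [mul_nonneg hm.le hS]
  linarith
end

section
/- Let A be an N×N real matrix that is a rate (generator) matrix in the column convention: A_{ji} ≥ 0 for all j ≠ i and Σ_j A_{ji} = 0 for every i. Let X = e_i be a standard basis vector of ℝ^N and Ψ = diag(A X) − diag(X) Aᵀ − A diag(X). Then for every C ∈ ℝ^N, Cᵀ Ψ C = Σ_{j ≠ i} A_{ji} (C_j − C_i)²; in particular Cᵀ Ψ C ≥ 0, so C ↦ √(Cᵀ Ψ C) is a well-defined seminorm on ℝ^N. -/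
open Matrix BigOperators

/-- For a rate matrix `A` (column convention: off-diagonal entries `A j i ≥ 0` and
columns summing to zero), `X = e_i`, and `Ψ = diag(AX) − diag(X)Aᵀ − A diag(X)`, the
quadratic form satisfies `Cᵀ Ψ C = Σ_{j ≠ i} A j i (C j − C i)² ≥ 0`. -/
theorem quadratic_form_eq_sum_of_rate_matrix
    (N : ℕ) (A : Matrix (Fin N) (Fin N) ℝ)
    (hoff : ∀ j i : Fin N, j ≠ i → 0 ≤ A j i)
    (hsum : ∀ i : Fin N, ∑ j, A j i = 0)
    (i : Fin N) (X : Fin N → ℝ) (hX : X = Pi.single i 1)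
    (Ψ : Matrix (Fin N) (Fin N) ℝ)
    (hΨ : Ψ = Matrix.diagonal (A.mulVec X) - Matrix.diagonal X * Aᵀ - A * Matrix.diagonal X)
    (C : Fin N → ℝ) :
    C ⬝ᵥ Ψ.mulVec C = ∑ j ∈ Finset.univ.filter (fun j => j ≠ i), A j i * (C j - C i) ^ 2
      ∧ 0 ≤ C ⬝ᵥ Ψ.mulVec C := by
  subst hX hΨ
  have hrhs : ∑ j ∈ Finset.univ.filter (fun j => j ≠ i), A j i * (C j - C i) ^ 2
      = ∑ j, A j i * (C j - C i) ^ 2 := by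
    rw [Finset.sum_filter]
    refine Finset.sum_congr rfl fun j _ => ?_
    by_cases h : j = i <;> simp [h]
  have h0 : ∑ j, A j i * C i ^ 2 = 0 := by
    rw [← Finset.sum_mul, hsum]; ring
  have key : C ⬝ᵥ (Matrix.diagonal (A.mulVec (Pi.single i 1)) - Matrix.diagonal (Pi.single i 1) * Aᵀ - A * Matrix.diagonal (Pi.single i 1)).mulVec C
      = ∑ j, A j i * (C j - C i) ^ 2 := by
    simp only [Matrix.mulVec, dotProduct, Matrix.sub_apply, Matrix.mul_apply,
      Matrix.diagonal_apply, Matrix.transpose_apply, Pi.single_apply,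
      ite_mul, mul_ite, zero_mul, mul_zero, one_mul, mul_one,
      Finset.sum_ite_eq, Finset.sum_ite_eq', Finset.mem_univ, if_true,
      Finset.sum_sub_distrib, Finset.mul_sum, Finset.sum_mul, sub_mul, mul_sub]
    have hdouble : (∑ x : Fin N, ∑ x1 : Fin N, if x = i then C x * (A x1 x * C x1) else 0)
        = ∑ x1 : Fin N, C i * (A x1 i * C x1) := by
      rw [Finset.sum_comm]; simp
    have hterm : ∀ j, A j i * (C j - C i) ^ 2
        = ((C j * (A j i * C j) - C i * (A j i * C j)) - C j * (A j i * C i)) + A j i * C i ^ 2 :=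
      fun j => by ring
    rw [hdouble]
    simp only [hterm]
    rw [Finset.sum_add_distrib, h0, add_zero, Finset.sum_sub_distrib, Finset.sum_sub_distrib]
  constructor
  · rw [key, hrhs]
  · rw [key, ← hrhs]
    exact Finset.sum_nonneg fun j hj =>
      mul_nonneg (hoff j i (Finset.mem_filter.mp hj).2) (sq_nonneg _)
end

section
/- Let T > 0. Let K¹, K² : [0,T] → ℝ be continuous nondecreasing functions with K¹(0) = K²(0) = 0, and let V¹, V², G : [0,T] → ℝ be bounded measurable functions such that V¹_u ≥ G_u and V²_u ≥ G_u for all u ∈ [0,T], and such that ∫_0^T (V¹_u − G_u) dK¹_u = 0 and ∫_0^T (V²_u − G_u) dK²_u = 0, where the integrals are Lebesgue–Stieltjes integrals with respect to the measures induced by K¹ and K². Then for every t ∈ [0,T], ∫_t^T (V¹_u − V²_u) dK¹_u − ∫_t^T (V¹_u − V²_u) dK²_u ≤ 0. -/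
/-!
On `(t, T]` write `V¹ − V² = (V¹ − G) − (V² − G)`. Against `dK¹` the first term integrates to
zero: it is nonnegative and its integral over the larger interval `(0, T]` already vanishes.
The second term is nonnegative, so `∫ (V¹ − V²) dK¹ ≤ 0`; symmetrically `∫ (V¹ − V²) dK² ≥ 0`.
-/

open MeasureTheory Set

section

variable {α : Type*} [MeasurableSpace α] {μ : Measure α} {s t : Set α} {f : α → ℝ}

theorem setIntegral_eq_zero_of_subset_of_nonneg (hts : t ⊆ s) (hs : MeasurableSet s)
    (hf : IntegrableOn f s μ) (hf0 : ∀ u ∈ s, 0 ≤ f u) (hfs : ∫ u in s, f u ∂μ = 0) :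
    ∫ u in t, f u ∂μ = 0 := by
  have hf_ae : f =ᵐ[μ.restrict s] 0 :=
    (setIntegral_eq_zero_iff_of_nonneg_ae ((ae_restrict_iff' hs).2 (.of_forall hf0)) hf).1 hfs
  exact integral_eq_zero_of_ae (ae_restrict_of_ae_restrict_of_subset hts hf_ae)

theorem setIntegral_sub_nonpos_of_setIntegral_sub_eq_zero (hs : MeasurableSet s)
    {V W G : α → ℝ} (hV : IntegrableOn (fun u => V u - G u) s μ)
    (hW : IntegrableOn (fun u => W u - G u) s μ) (hWG : ∀ u ∈ s, G u ≤ W u)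
    (hVG : ∫ u in s, (V u - G u) ∂μ = 0) :
    ∫ u in s, (V u - W u) ∂μ ≤ 0 := by
  have hW0 : 0 ≤ ∫ u in s, (W u - G u) ∂μ :=
    setIntegral_nonneg hs fun u hu => sub_nonneg.2 (hWG u hu)
  calc ∫ u in s, (V u - W u) ∂μ
      = ∫ u in s, ((V u - G u) - (W u - G u)) ∂μ := by simp only [sub_sub_sub_cancel_right]
    _ = -∫ u in s, (W u - G u) ∂μ := by rw [integral_sub hV hW, hVG, zero_sub]
    _ ≤ 0 := neg_nonpos.2 hW0

end

theorem StieltjesFunction.integrableOn_Ioc_of_abs_le (K : StieltjesFunction ℝ) {f : ℝ → ℝ}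
    {s : Set ℝ} {C a b : ℝ} (hf : Measurable f) (hfC : ∀ u ∈ s, |f u| ≤ C)
    (hab : Ioc a b ⊆ s) :
    IntegrableOn f (Ioc a b) K.measure :=
  Measure.integrableOn_of_bounded (M := C) (by simp [K.measure_Ioc]) hf.aestronglyMeasurable
    ((ae_restrict_iff' measurableSet_Ioc).2 (.of_forall fun u hu => hfC u (hab hu)))

theorem skorokhod_cross_term_nonpos_general
    (T : ℝ)
    (K₁ K₂ : StieltjesFunction ℝ)
    (V₁ V₂ G : ℝ → ℝ) (M : ℝ)
    (hV₁m : Measurable V₁) (hV₂m : Measurable V₂) (hGm : Measurable G)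
    (hV₁b : ∀ u ∈ Set.Icc 0 T, |V₁ u| ≤ M) (hV₂b : ∀ u ∈ Set.Icc 0 T, |V₂ u| ≤ M)
    (hGb : ∀ u ∈ Set.Icc 0 T, |G u| ≤ M)
    (hV₁G : ∀ u ∈ Set.Icc 0 T, G u ≤ V₁ u) (hV₂G : ∀ u ∈ Set.Icc 0 T, G u ≤ V₂ u)
    (hSk₁ : ∫ u in Set.Ioc (0:ℝ) T, (V₁ u - G u) ∂K₁.measure = 0)
    (hSk₂ : ∫ u in Set.Ioc (0:ℝ) T, (V₂ u - G u) ∂K₂.measure = 0)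
    (t : ℝ) (ht : t ∈ Set.Icc 0 T) :
    (∫ u in Set.Ioc t T, (V₁ u - V₂ u) ∂K₁.measure)
      - ∫ u in Set.Ioc t T, (V₁ u - V₂ u) ∂K₂.measure ≤ 0 := by
  have hIoc₀ : Ioc 0 T ⊆ Icc 0 T := Ioc_subset_Icc_self
  have hIoc : Ioc t T ⊆ Ioc 0 T := Ioc_subset_Ioc_left ht.1
  have hb (V : ℝ → ℝ) (hV : ∀ u ∈ Icc 0 T, |V u| ≤ M) : ∀ u ∈ Icc 0 T, |V u - G u| ≤ M + M :=
    fun u hu => (abs_sub _ _).trans (add_le_add (hV u hu) (hGb u hu))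
  have hint (K : StieltjesFunction ℝ) {V : ℝ → ℝ} (hVm : Measurable V)
      (hV : ∀ u ∈ Icc 0 T, |V u| ≤ M) {a : ℝ} (ha : Ioc a T ⊆ Icc 0 T) :
      IntegrableOn (fun u => V u - G u) (Ioc a T) K.measure :=
    K.integrableOn_Ioc_of_abs_le (hVm.sub hGm) (hb V hV) ha
  have hzero (K : StieltjesFunction ℝ) {V : ℝ → ℝ} (hVm : Measurable V)
      (hV : ∀ u ∈ Icc 0 T, |V u| ≤ M) (hVG : ∀ u ∈ Icc 0 T, G u ≤ V u)
      (hSk : ∫ u in Ioc 0 T, (V u - G u) ∂K.measure = 0) :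
      ∫ u in Ioc t T, (V u - G u) ∂K.measure = 0 :=
    setIntegral_eq_zero_of_subset_of_nonneg hIoc measurableSet_Ioc (hint K hVm hV hIoc₀)
      (fun u hu => sub_nonneg.2 (hVG u (hIoc₀ hu))) hSk
  have hsub := hIoc.trans hIoc₀
  have h₁ := setIntegral_sub_nonpos_of_setIntegral_sub_eq_zero measurableSet_Ioc
    (hint K₁ hV₁m hV₁b hsub) (hint K₁ hV₂m hV₂b hsub) (fun u hu => hV₂G u (hsub hu))
    (hzero K₁ hV₁m hV₁b hV₁G hSk₁)
  have h₂ := setIntegral_sub_nonpos_of_setIntegral_sub_eq_zero measurableSet_Ioc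
    (hint K₂ hV₂m hV₂b hsub) (hint K₂ hV₁m hV₁b hsub) (fun u hu => hV₁G u (hsub hu))
    (hzero K₂ hV₂m hV₂b hV₂G hSk₂)
  have hswap : ∫ u in Ioc t T, (V₁ u - V₂ u) ∂K₂.measure
      = -∫ u in Ioc t T, (V₂ u - V₁ u) ∂K₂.measure := by
    rw [← integral_neg]; simp only [neg_sub]
  linarith

/-- The key pathwise inequality in the paper's uniqueness proof for reflected BSDEs:
if `V¹, V²` dominate the obstacle `G` and the Skorokhod minimality conditions
`∫_0^T (Vⁱ − G) dKⁱ = 0` hold for the continuous nondecreasing processes `K¹, K²`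
(vanishing at `0`), then `∫_t^T (V¹ − V²) dK¹ − ∫_t^T (V¹ − V²) dK² ≤ 0`. -/
theorem skorokhod_cross_term_nonpos
    (T : ℝ) (hT : 0 < T)
    (K₁ K₂ : StieltjesFunction ℝ)
    (hK₁c : Continuous (K₁ : ℝ → ℝ)) (hK₂c : Continuous (K₂ : ℝ → ℝ))
    (hK₁0 : K₁ 0 = 0) (hK₂0 : K₂ 0 = 0)
    (V₁ V₂ G : ℝ → ℝ) (M : ℝ)
    (hV₁m : Measurable V₁) (hV₂m : Measurable V₂) (hGm : Measurable G)
    (hV₁b : ∀ u ∈ Set.Icc 0 T, |V₁ u| ≤ M) (hV₂b : ∀ u ∈ Set.Icc 0 T, |V₂ u| ≤ M)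
    (hGb : ∀ u ∈ Set.Icc 0 T, |G u| ≤ M)
    (hV₁G : ∀ u ∈ Set.Icc 0 T, G u ≤ V₁ u) (hV₂G : ∀ u ∈ Set.Icc 0 T, G u ≤ V₂ u)
    (hSk₁ : ∫ u in Set.Ioc (0:ℝ) T, (V₁ u - G u) ∂K₁.measure = 0)
    (hSk₂ : ∫ u in Set.Ioc (0:ℝ) T, (V₂ u - G u) ∂K₂.measure = 0)
    (t : ℝ) (ht : t ∈ Set.Icc 0 T) :
    (∫ u in Set.Ioc t T, (V₁ u - V₂ u) ∂K₁.measure)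
      - ∫ u in Set.Ioc t T, (V₁ u - V₂ u) ∂K₂.measure ≤ 0 :=
  skorokhod_cross_term_nonpos_general T K₁ K₂ V₁ V₂ G M hV₁m hV₂m hGm hV₁b hV₂b hGb hV₁G hV₂G hSk₁
    hSk₂ t ht
end
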